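/- Normalization step of Theorem 1: let d ≥ 2, let (G, U) be a unitary 2-design, T : G → superoperators an arbitrary family, and p, t ∈ ℂ with p ≠ 0 and t ≠ 0. Suppose the superoperators L and R satisfy E_{g∈G}[T(g) ∘ L ∘ Ad(U g)⁻¹] = L ∘ D_{p,t} and E_{g∈G}[Ad(U g)⁻¹ ∘ R ∘ T(g)] = D_{p,t} ∘ R, and suppose the twirl E_{g∈G}[Ad(U g) ∘ (R ∘ L) ∘ Ad(U g)⁻¹] equals D_{q,u} with q ≠ 0 and u ≠ 0. Then the rescaled map L' := L ∘ D_{p/q, t/u} together with R satisfies all three equations: E_{g∈G}[T(g) ∘ L' ∘ Ad(U g)⁻¹] = L' ∘ D_{p,t}, E_{g∈G}[Ad(U g)⁻¹ ∘ R ∘ T(g)] = D_{p,t} ∘ R, and E_{g∈G}[Ad(U g) ∘ (R ∘ L') ∘ Ad(U g)⁻¹] = D_{p,t}. -/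
import Mathlib


noncomputable section

namespace RBPaper

abbrev Mat (d : ℕ) := Matrix (Fin d) (Fin d) ℂ

abbrev SuperOp (d : ℕ) := Module.End ℂ (Mat d)

/-- The superoperator `X ↦ U X Uᴴ` for a unitary `U`. -/
def Ad {d : ℕ} (U : Matrix.unitaryGroup (Fin d) ℂ) : SuperOp d :=
  LinearMap.mulLeft ℂ (U : Mat d) ∘ₗ LinearMap.mulRight ℂ (star (U : Mat d))

/-- The superoperator `X ↦ tr(X) • I`. -/
def traceMap (d : ℕ) : SuperOp d :=
  (Matrix.traceLinearMap (Fin d) ℂ ℂ).smulRight (1 : Mat d)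

/-- The depolarizing-type map `D_{p,t} : X ↦ (t/d)·tr(X)·I + p·(X − (tr(X)/d)·I)`. -/
def Dpt (d : ℕ) (p t : ℂ) : SuperOp d :=
  (t / d) • traceMap d + p • (LinearMap.id - (d : ℂ)⁻¹ • traceMap d)

/-- The projection `Π₀ : X ↦ X − (tr(X)/d)·I` onto traceless matrices. -/
def Pi0 (d : ℕ) : SuperOp d := LinearMap.id - (d : ℂ)⁻¹ • traceMap d

/-- Uniform average of a finitely-indexed family in a `ℂ`-module. -/
def expG {G : Type*} [Fintype G] {M : Type*} [AddCommMonoid M] [Module ℂ M]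
    (f : G → M) : M := (Fintype.card G : ℂ)⁻¹ • ∑ g, f g

/-- `(G, U)` is a unitary 2-design: the conjugation action has no nontrivial
invariant subspace of the traceless matrices. -/
def IsTwoDesign {d : ℕ} {G : Type*} [Group G] [Fintype G]
    (U : G →* Matrix.unitaryGroup (Fin d) ℂ) : Prop :=
  ∀ W : Submodule ℂ (Mat d),
    W ≤ LinearMap.ker (Matrix.traceLinearMap (Fin d) ℂ ℂ) →
    (∀ (g : G), ∀ X ∈ W, Ad (U g) X ∈ W) →
    W = ⊥ ∨ W = LinearMap.ker (Matrix.traceLinearMap (Fin d) ℂ ℂ)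


lemma traceMap_apply {d : ℕ} (X : Mat d) : traceMap d X = X.trace • 1 := rfl

lemma Ad_apply {d : ℕ} (V : Matrix.unitaryGroup (Fin d) ℂ) (X : Mat d) :
    Ad V X = (V : Mat d) * X * star (V : Mat d) := (mul_assoc _ _ _).symm

lemma Ad_comm_traceMap {d : ℕ} (V : Matrix.unitaryGroup (Fin d) ℂ) :
    Ad V ∘ₗ traceMap d = traceMap d ∘ₗ Ad V := by
  ext X
  simp only [LinearMap.comp_apply, Ad_apply, traceMap_apply]
  rw [Matrix.mul_smul, Matrix.smul_mul, mul_one,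
    show (V : Mat d) * star (V : Mat d) = 1 from V.2.2, Matrix.trace_mul_cycle,
    show star (V : Mat d) * (V : Mat d) = 1 from V.2.1, one_mul]

lemma Ad_comm_Dpt {d : ℕ} (V : Matrix.unitaryGroup (Fin d) ℂ) (a b : ℂ) :
    Ad V ∘ₗ Dpt d a b = Dpt d a b ∘ₗ Ad V := by
  unfold Dpt
  simp only [LinearMap.comp_add, LinearMap.add_comp, LinearMap.comp_smul,
    LinearMap.smul_comp, LinearMap.comp_sub, LinearMap.sub_comp,
    LinearMap.comp_id, LinearMap.id_comp, Ad_comm_traceMap]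

lemma traceMap_comp_traceMap {d : ℕ} :
    traceMap d ∘ₗ traceMap d = (d : ℂ) • traceMap d := by
  ext X
  simp only [LinearMap.comp_apply, traceMap_apply, LinearMap.smul_apply]
  rw [Matrix.trace_smul, Matrix.trace_one, Fintype.card_fin]
  simp only [smul_smul, smul_eq_mul]
  ring_nf

lemma Dpt_comp {d : ℕ} (hd : (d : ℂ) ≠ 0) (a b a' b' : ℂ) :
    Dpt d a b ∘ₗ Dpt d a' b' = Dpt d (a * a') (b * b') := by
  refine LinearMap.ext fun X => ?_
  simp only [LinearMap.comp_apply, Dpt, LinearMap.add_apply, LinearMap.smul_apply,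
    LinearMap.sub_apply, LinearMap.id_apply, traceMap_apply]
  simp only [Matrix.trace_add, Matrix.trace_smul, Matrix.trace_sub, Matrix.trace_one,
    Fintype.card_fin, smul_smul, smul_sub, smul_add, smul_eq_mul]
  match_scalars <;> (field_simp; try ring)

lemma expG_comp_right {G : Type*} [Fintype G] {d : ℕ} (f : G → SuperOp d)
    (A : SuperOp d) : expG (fun g => f g ∘ₗ A) = expG f ∘ₗ A := by
  refine LinearMap.ext fun X => ?_
  simp [expG, LinearMap.sum_apply]

/-- Normalization step of Theorem 1: rescaling `L` by
`D_{p/q, t/u}` makes the pair `(L', R)` satisfy all three defining equations. -/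
theorem normalization_step {d : ℕ} (hd : 2 ≤ d) {G : Type*} [Group G] [Fintype G]
    (U : G →* Matrix.unitaryGroup (Fin d) ℂ) (hU : IsTwoDesign U)
    (T : G → SuperOp d) (p t q u : ℂ)
    (hp : p ≠ 0) (ht : t ≠ 0) (hq : q ≠ 0) (hu : u ≠ 0)
    (L R : SuperOp d)
    (hL : expG (fun g : G => T g ∘ₗ L ∘ₗ Ad ((U g)⁻¹)) = L ∘ₗ Dpt d p t)
    (hR : expG (fun g : G => Ad ((U g)⁻¹) ∘ₗ R ∘ₗ T g) = Dpt d p t ∘ₗ R)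
    (htwirl : expG (fun g : G => Ad (U g) ∘ₗ (R ∘ₗ L) ∘ₗ Ad ((U g)⁻¹)) = Dpt d q u) :
    expG (fun g : G => T g ∘ₗ (L ∘ₗ Dpt d (p / q) (t / u)) ∘ₗ Ad ((U g)⁻¹)) =
        (L ∘ₗ Dpt d (p / q) (t / u)) ∘ₗ Dpt d p t ∧
      expG (fun g : G => Ad ((U g)⁻¹) ∘ₗ R ∘ₗ T g) = Dpt d p t ∘ₗ R ∧
      expG (fun g : G =>
          Ad (U g) ∘ₗ (R ∘ₗ (L ∘ₗ Dpt d (p / q) (t / u))) ∘ₗ Ad ((U g)⁻¹)) =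
        Dpt d p t := by
  have hd0 : (d : ℂ) ≠ 0 := Nat.cast_ne_zero.mpr (by omega)
  set D' := Dpt d (p / q) (t / u) with hD'
  have hcomm : ∀ g : G, D' ∘ₗ Ad ((U g)⁻¹) = Ad ((U g)⁻¹) ∘ₗ D' :=
    fun g => (Ad_comm_Dpt _ _ _).symm
  refine ⟨?_, hR, ?_⟩
  · have key : (fun g : G => T g ∘ₗ (L ∘ₗ D') ∘ₗ Ad ((U g)⁻¹)) =
        fun g : G => (T g ∘ₗ L ∘ₗ Ad ((U g)⁻¹)) ∘ₗ D' := by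
      funext g
      calc T g ∘ₗ (L ∘ₗ D') ∘ₗ Ad ((U g)⁻¹)
          = T g ∘ₗ L ∘ₗ (D' ∘ₗ Ad ((U g)⁻¹)) := by simp only [LinearMap.comp_assoc]
        _ = (T g ∘ₗ L ∘ₗ Ad ((U g)⁻¹)) ∘ₗ D' := by
            rw [hcomm g]; simp only [LinearMap.comp_assoc]
    rw [key, expG_comp_right, hL]
    simp only [LinearMap.comp_assoc, hD', Dpt_comp hd0]
    rw [mul_comm p (p / q), mul_comm t (t / u)]
  · have key : (fun g : G => Ad (U g) ∘ₗ (R ∘ₗ (L ∘ₗ D')) ∘ₗ Ad ((U g)⁻¹)) =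
        fun g : G => (Ad (U g) ∘ₗ (R ∘ₗ L) ∘ₗ Ad ((U g)⁻¹)) ∘ₗ D' := by
      funext g
      calc Ad (U g) ∘ₗ (R ∘ₗ (L ∘ₗ D')) ∘ₗ Ad ((U g)⁻¹)
          = Ad (U g) ∘ₗ R ∘ₗ L ∘ₗ (D' ∘ₗ Ad ((U g)⁻¹)) := by
            simp only [LinearMap.comp_assoc]
        _ = (Ad (U g) ∘ₗ (R ∘ₗ L) ∘ₗ Ad ((U g)⁻¹)) ∘ₗ D' := by
            rw [hcomm g]; simp only [LinearMap.comp_assoc]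
    rw [key, expG_comp_right, htwirl, hD', Dpt_comp hd0,
      show q * (p / q) = p by field_simp, show u * (t / u) = t by field_simp]

end RBPaper
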